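/- arXiv:math/0601658 — 3 statements merged into one kernel-verified Lean document; each statement's English description precedes it below -/
import Mathlib

section
/- Let p: ℝ × ℝ → ℝⁿ be continuous, continuously differentiable in its first argument, and let τ > 0. Then for all t ∈ ℝ, the derivative with respect to t of ∫_{t-τ}^t ∫_s^t p(t,l) dl ds equals τ·p(t,t) − ∫_{t-τ}^t p(t,l) dl + ∫_{t-τ}^t ∫_s^t (∂p/∂t)(t,l) dl ds. -/
/-!
With `G (x, y) = ∫ s in 0..y, f (x, s)`, both partial derivatives of `G` are continuous, so `G` is
differentiable and the chain rule gives the Leibniz rule for `∫ s in a x..b x, f (x, s)`. Applied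
to the inner integral `g (x, s) = ∫ l in s..x, p (x, l)` and then to the outer one, it yields the
formula, the boundary term at the upper limit vanishing because `g (t, t) = 0`.
-/

open MeasureTheory intervalIntegral Set Metric Filter ContinuousLinearMap

variable {E : Type*} [NormedAddCommGroup E] [NormedSpace ℝ E]

theorem continuous_intervalIntegral_of_continuous {X : Type*} [TopologicalSpace X]
    {f : ℝ × ℝ → E} (hf : Continuous f) {u a b : X → ℝ} (hu : Continuous u)
    (ha : Continuous a) (hb : Continuous b) :
    Continuous fun z => ∫ s in a z..b z, f (u z, s) := by
  have hfu : Continuous (Function.uncurry fun z s => f (u z, s)) := by fun_prop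
  have hprim : ∀ e : X → ℝ, Continuous e →
      Continuous fun z => ∫ s in (0 : ℝ)..e z, f (u z, s) :=
    fun e he => continuous_parametric_intervalIntegral_of_continuous hfu he
  have hsec : ∀ z, Continuous fun s => f (u z, s) := fun z => hf.comp (Continuous.prodMk_right _)
  exact ((hprim b hb).sub (hprim a ha)).congr fun z =>
    integral_interval_sub_left ((hsec z).intervalIntegrable _ _) ((hsec z).intervalIntegrable _ _)

theorem hasDerivAt_intervalIntegral_param {f f' : ℝ × ℝ → E} (hf : Continuous f)
    (hf' : Continuous f') (hderiv : ∀ x s, HasDerivAt (fun x' => f (x', s)) (f' (x, s)) x)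
    (a b x : ℝ) :
    HasDerivAt (fun x => ∫ s in a..b, f (x, s)) (∫ s in a..b, f' (x, s)) x := by
  obtain ⟨C, hC⟩ :=
    ((isCompact_closedBall x 1).prod isCompact_uIcc).exists_bound_of_continuousOn hf'.continuousOn
  refine (hasDerivAt_integral_of_dominated_loc_of_deriv_le (bound := fun _ => C)
    (ball_mem_nhds x one_pos)
    (Eventually.of_forall fun y => (hf.comp (Continuous.prodMk_right y)).aestronglyMeasurable)
    ((hf.comp (Continuous.prodMk_right x)).intervalIntegrable a b)
    (hf'.comp (Continuous.prodMk_right x)).aestronglyMeasurable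
    (ae_of_all _ fun s hs y hy => hC (y, s) ⟨ball_subset_closedBall hy, uIoc_subset_uIcc hs⟩)
    intervalIntegrable_const (ae_of_all _ fun s _ y _ => hderiv y s)).2

variable [CompleteSpace E]

theorem hasStrictFDerivAt_intervalIntegral_primitive {f f' : ℝ × ℝ → E} (hf : Continuous f)
    (hf' : Continuous f') (hderiv : ∀ x s, HasDerivAt (fun x' => f (x', s)) (f' (x, s)) x)
    (c : ℝ) (z : ℝ × ℝ) :
    HasStrictFDerivAt (fun z : ℝ × ℝ => ∫ s in c..z.2, f (z.1, s))
      ((toSpanSingleton ℝ (∫ s in c..z.2, f' (z.1, s))).coprod (toSpanSingleton ℝ (f z))) z :=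
  hasStrictFDerivAt_uncurry_coprod (f := fun x y => ∫ s in c..y, f (x, s))
    (f₁ := fun x y => toSpanSingleton ℝ (∫ s in c..y, f' (x, s)))
    (f₂ := fun x y => toSpanSingleton ℝ (f (x, y)))
    (Eventually.of_forall fun v => hasDerivAt_intervalIntegral_param hf hf' hderiv c v.2 v.1)
    (Eventually.of_forall fun v =>
      ((hf.comp (Continuous.prodMk_right v.1)).integral_hasStrictDerivAt c v.2).hasDerivAt)
    (toSpanSingletonCLE.continuous.comp (continuous_intervalIntegral_of_continuous hf'
      continuous_fst continuous_const continuous_snd)).continuousAt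
    (toSpanSingletonCLE.continuous.comp hf).continuousAt

theorem hasDerivAt_intervalIntegral_variable_upper {f f' : ℝ × ℝ → E} (hf : Continuous f)
    (hf' : Continuous f') (hderiv : ∀ x s, HasDerivAt (fun x' => f (x', s)) (f' (x, s)) x)
    (c : ℝ) {b : ℝ → ℝ} {b' t : ℝ} (hb : HasDerivAt b b' t) :
    HasDerivAt (fun x => ∫ s in c..b x, f (x, s))
      ((∫ s in c..b t, f' (t, s)) + b' • f (t, b t)) t := by
  have h := (hasStrictFDerivAt_intervalIntegral_primitive hf hf' hderiv c (t, b t)).hasFDerivAt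
    |>.comp_hasDerivAt t ((hasDerivAt_id t).prodMk hb)
  simpa [Function.comp_def] using h

theorem hasDerivAt_intervalIntegral_leibniz {f f' : ℝ × ℝ → E} (hf : Continuous f)
    (hf' : Continuous f') (hderiv : ∀ x s, HasDerivAt (fun x' => f (x', s)) (f' (x, s)) x)
    {a b : ℝ → ℝ} {a' b' t : ℝ} (ha : HasDerivAt a a' t) (hb : HasDerivAt b b' t) :
    HasDerivAt (fun x => ∫ s in a x..b x, f (x, s))
      (b' • f (t, b t) - a' • f (t, a t) + ∫ s in a t..b t, f' (t, s)) t := by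
  have hint : ∀ (g : ℝ × ℝ → E), Continuous g → ∀ x u v : ℝ,
      IntervalIntegrable (fun s => g (x, s)) volume u v :=
    fun g hg x u v => (hg.comp (Continuous.prodMk_right x)).intervalIntegrable u v
  have h := (hasDerivAt_intervalIntegral_variable_upper hf hf' hderiv 0 hb).sub
    (hasDerivAt_intervalIntegral_variable_upper hf hf' hderiv 0 ha)
  rw [← integral_interval_sub_left (hint f' hf' t 0 (b t)) (hint f' hf' t 0 (a t))]
  convert h using 1
  · exact funext fun x =>
      (integral_interval_sub_left (hint f hf x 0 (b x)) (hint f hf x 0 (a x))).symm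
  · abel

theorem stmt0_general {n : ℕ} (p dp : ℝ × ℝ → EuclideanSpace ℝ (Fin n))
    (hp : Continuous p) (hdp : Continuous dp)
    (hderiv : ∀ t l : ℝ, HasDerivAt (fun t' => p (t', l)) (dp (t, l)) t)
    (τ : ℝ) (t : ℝ) :
    HasDerivAt (fun t' => ∫ s in (t' - τ)..t', ∫ l in s..t', p (t', l))
      (τ • p (t, t) - (∫ l in (t - τ)..t, p (t, l))
        + ∫ s in (t - τ)..t, ∫ l in s..t, dp (t, l)) t := by
  let g : ℝ × ℝ → EuclideanSpace ℝ (Fin n) := fun z => ∫ l in z.2..z.1, p (z.1, l)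
  let dg : ℝ × ℝ → EuclideanSpace ℝ (Fin n) := fun z =>
    p (z.1, z.1) + ∫ l in z.2..z.1, dp (z.1, l)
  have hinner : Continuous fun s => ∫ l in s..t, dp (t, l) :=
    continuous_intervalIntegral_of_continuous hdp continuous_const continuous_id continuous_const
  have hg : Continuous g :=
    continuous_intervalIntegral_of_continuous hp continuous_fst continuous_snd continuous_fst
  have hdg : Continuous dg := (hp.comp (by fun_prop)).add
    (continuous_intervalIntegral_of_continuous hdp continuous_fst continuous_snd continuous_fst)
  have hg_deriv : ∀ x s, HasDerivAt (fun x' => g (x', s)) (dg (x, s)) x := fun x s => by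
    simpa [g, dg] using
      hasDerivAt_intervalIntegral_leibniz hp hdp hderiv (hasDerivAt_const x s) (hasDerivAt_id x)
  refine (hasDerivAt_intervalIntegral_leibniz hg hdg hg_deriv
    ((hasDerivAt_id t).sub_const τ) (hasDerivAt_id t)).congr_deriv ?_
  simp only [g, dg, id, one_smul, integral_same, zero_sub]
  rw [integral_add intervalIntegrable_const (hinner.intervalIntegrable _ _),
    intervalIntegral.integral_const, sub_sub_cancel]
  abel

/-- Leibniz-type identity for the derivative of
`t ↦ ∫_{t-τ}^t ∫_s^t p(t,l) dl ds` where `p : ℝ × ℝ → ℝⁿ` is continuous and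
C¹ in its first argument (with partial derivative `dp`). -/
theorem stmt0 {n : ℕ} (p dp : ℝ × ℝ → EuclideanSpace ℝ (Fin n))
    (hp : Continuous p) (hdp : Continuous dp)
    (hderiv : ∀ t l : ℝ, HasDerivAt (fun t' => p (t', l)) (dp (t, l)) t)
    (τ : ℝ) (hτ : 0 < τ) (t : ℝ) :
    HasDerivAt (fun t' => ∫ s in (t' - τ)..t', ∫ l in s..t', p (t', l))
      (τ • p (t, t) - (∫ l in (t - τ)..t, p (t, l))
        + ∫ s in (t - τ)..t, ∫ l in s..t, dp (t, l)) t :=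
  stmt0_general p dp hp hdp hderiv τ t
end

section
/- Let p: ℝ → ℝ be continuous with |p(l)| ≤ p_max for all l, and T > 0 satisfy ∫_{kT}^{(k+1)T} p(r) dr = 0 for all k ∈ ℤ. Then for all α > 0 and all t with αt − α ≥ 0: (i) |∫_{t-1}^t p(αl) dl| ≤ 2 T p_max / α, and (ii) |∫_{t-1}^t (∫_s^t p(αl) dl) ds| ≤ 2 T p_max / α. -/
/-! The primitive `F x = ∫₀ˣ p` vanishes at every multiple of `T`, and each point lies within
`T` of such a multiple, so `|F| ≤ T p_max` everywhere. Hence `|∫ₐᵇ p| = |F b - F a| ≤ 2 T p_max`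
for all `a, b`, and the substitution `l ↦ α l` divides this bound by `α`. Bound (ii) follows from
(i) applied to each inner integral over an interval of length `1`. -/

open intervalIntegral MeasureTheory

section ZeroMeanOverPeriods

variable {p : ℝ → ℝ} {T : ℝ}

theorem integral_zero_intCast_mul_eq_zero (hp : ∀ a b : ℝ, IntervalIntegrable p volume a b)
    (hzero : ∀ k : ℤ, ∫ r in (k * T)..((k + 1) * T), p r = 0) (k : ℤ) :
    ∫ r in (0 : ℝ)..(k * T), p r = 0 := by
  induction k using Int.induction_on with
  | zero => simp
  | succ n ih =>
    have hadd := integral_add_adjacent_intervals (hp 0 (n * T)) (hp (n * T) ((n + 1) * T))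
    have hstep := hzero n
    push_cast at ih hstep ⊢
    rw [← hadd, ih, hstep, add_zero]
  | pred n ih =>
    have hadd := integral_add_adjacent_intervals
      (hp 0 ((-(n : ℝ) - 1) * T)) (hp ((-(n : ℝ) - 1) * T) (-(n : ℝ) * T))
    have hstep := hzero (-(n : ℤ) - 1)
    push_cast at ih hstep ⊢
    rw [show (-(n : ℝ) - 1 + 1) * T = -(n : ℝ) * T by ring] at hstep
    rw [hstep, add_zero, ih] at hadd
    exact hadd

theorem abs_integral_zero_le (hp : ∀ a b : ℝ, IntervalIntegrable p volume a b) {pmax : ℝ}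
    (hbound : ∀ l : ℝ, |p l| ≤ pmax) (hT : 0 < T)
    (hzero : ∀ k : ℤ, ∫ r in (k * T)..((k + 1) * T), p r = 0) (x : ℝ) :
    |∫ r in (0 : ℝ)..x, p r| ≤ T * pmax := by
  set c : ℝ := ⌊x / T⌋ * T
  have hcx : c ≤ x := (le_div_iff₀ hT).mp (Int.floor_le _)
  have hxc : x - c ≤ T := by
    have := (div_lt_iff₀ hT).mp (Int.lt_floor_add_one (x / T))
    linarith
  have hsplit : ∫ r in (0 : ℝ)..x, p r = ∫ r in c..x, p r := by
    rw [← integral_add_adjacent_intervals (hp 0 c) (hp c x),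
      integral_zero_intCast_mul_eq_zero hp hzero, zero_add]
  have hpmax : 0 ≤ pmax := (abs_nonneg _).trans (hbound 0)
  calc |∫ r in (0 : ℝ)..x, p r| = ‖∫ r in c..x, p r‖ := by rw [hsplit, Real.norm_eq_abs]
    _ ≤ pmax * |x - c| := norm_integral_le_of_norm_le_const fun l _ => hbound l
    _ ≤ T * pmax := by
      rw [abs_of_nonneg (sub_nonneg.mpr hcx), mul_comm]
      exact mul_le_mul_of_nonneg_right hxc hpmax

theorem abs_intervalIntegral_le_two_mul (hp : ∀ a b : ℝ, IntervalIntegrable p volume a b)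
    {pmax : ℝ} (hbound : ∀ l : ℝ, |p l| ≤ pmax) (hT : 0 < T)
    (hzero : ∀ k : ℤ, ∫ r in (k * T)..((k + 1) * T), p r = 0) (a b : ℝ) :
    |∫ r in a..b, p r| ≤ 2 * T * pmax := by
  rw [← integral_interval_sub_left (hp 0 b) (hp 0 a)]
  have ha := abs_integral_zero_le hp hbound hT hzero a
  have hb := abs_integral_zero_le hp hbound hT hzero b
  linarith [abs_sub (∫ r in (0 : ℝ)..b, p r) (∫ r in (0 : ℝ)..a, p r)]

theorem abs_integral_comp_mul_left_le (hp : ∀ a b : ℝ, IntervalIntegrable p volume a b)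
    {pmax : ℝ} (hbound : ∀ l : ℝ, |p l| ≤ pmax) (hT : 0 < T)
    (hzero : ∀ k : ℤ, ∫ r in (k * T)..((k + 1) * T), p r = 0) {α : ℝ} (hα : 0 < α) (a b : ℝ) :
    |∫ l in a..b, p (α * l)| ≤ 2 * T * pmax / α := by
  rw [integral_comp_mul_left p hα.ne', smul_eq_mul, abs_mul, abs_inv, abs_of_pos hα,
    inv_mul_eq_div]
  exact div_le_div_of_nonneg_right (abs_intervalIntegral_le_two_mul hp hbound hT hzero _ _) hα.le

end ZeroMeanOverPeriods

theorem stmt4_general (p : ℝ → ℝ) (hp : Continuous p) (pmax : ℝ)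
    (hbound : ∀ l : ℝ, |p l| ≤ pmax) (T : ℝ) (hT : 0 < T)
    (hzero : ∀ k : ℤ, ∫ r in (k * T)..((k + 1) * T), p r = 0)
    (α t : ℝ) (hα : 0 < α) :
    |∫ l in (t - 1)..t, p (α * l)| ≤ 2 * T * pmax / α ∧
    |∫ s in (t - 1)..t, ∫ l in s..t, p (α * l)| ≤ 2 * T * pmax / α := by
  have hinner := abs_integral_comp_mul_left_le hp.intervalIntegrable hbound hT hzero hα
  refine ⟨hinner _ _, ?_⟩
  have hle : ‖∫ s in (t - 1)..t, ∫ l in s..t, p (α * l)‖ ≤ 2 * T * pmax / α * |t - (t - 1)| :=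
    norm_integral_le_of_norm_le_const fun s _ => hinner s t
  simpa using hle

/-- bounds `|∫_{t-1}^t p(αl) dl| ≤ 2Tp_max/α` and
`|∫_{t-1}^t ∫_s^t p(αl) dl ds| ≤ 2Tp_max/α` under the zero-mean condition. -/
theorem stmt4 (p : ℝ → ℝ) (hp : Continuous p) (pmax : ℝ)
    (hbound : ∀ l : ℝ, |p l| ≤ pmax) (T : ℝ) (hT : 0 < T)
    (hzero : ∀ k : ℤ, ∫ r in (k * T)..((k + 1) * T), p r = 0)
    (α t : ℝ) (hα : 0 < α) (h : 0 ≤ α * t - α) :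
    |∫ l in (t - 1)..t, p (α * l)| ≤ 2 * T * pmax / α ∧
    |∫ s in (t - 1)..t, ∫ l in s..t, p (α * l)| ≤ 2 * T * pmax / α :=
  stmt4_general p hp pmax hbound T hT hzero α t hα
end

section
/- With the notation and assumptions of the friction model: constants k₀, k̄, σ̃₁ > 0, σ̃₂, σ̃₃ ≥ 0, β₁ > 0, β₂ > 0, S := σ̃₁ + (σ̃₂+σ̃₃)β₂, A := 1 + 1/k₀ + (1 + S²/k₀)/σ̃₁, k: [0,∞) → ℝ C¹ with k₀ ≤ k ≤ k̄ and k' ≤ 0, μ: ℝ → [0,∞) continuous, sat(ξ) := tanh(β₂ ξ), and V(x,t) := A(k(t)x₁² + x₂²) + x₁x₂. Then along the system ẋ₁ = x₂, ẋ₂ = −σ̃₁ x₂ − (σ̃₂ + σ̃₃ e^{−β₁ μ(x₂)}) sat(x₂) − k(t)x₁, the derivative V_t + V_x · f̄(x,t) is at most −b(x₁² + x₂²) for all x ∈ ℝ², t ≥ 0, where b := min{k₀/2, A σ̃₁ − 1/2}. -/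
/-!
After expanding, the terms `± 2A k(t) x₁ x₂` cancel, `A k'(t) x₁²` and the damping term
`-2A c x₂ tanh(β₂ x₂)` (with `c = σ̃₂ + σ̃₃ e^{-β₁ μ(x₂)} ∈ [0, σ̃₂ + σ̃₃]`) are nonpositive, and
`-k(t) x₁² ≤ -k₀ x₁²`. Since `|tanh y| ≤ |y|`, the remaining cross term
`-x₁ (σ̃₁ x₂ + c tanh(β₂ x₂))` is at most `S |x₁| |x₂|`, and Young's inequality splits it into
`(k₀/2) x₁² + (S²/(2k₀)) x₂²`; the choice of `A` makes `A σ̃₁ ≥ 1/2 + S²/(2k₀)`, which absorbs the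
`x₂²` part.
-/

open Real

namespace Real

theorem sinh_le_mul_cosh {x : ℝ} (hx : 0 ≤ x) : sinh x ≤ x * cosh x := by
  have hasDeriv (u : ℝ) : HasDerivAt (fun s => s * cosh s - sinh s) (u * sinh u) u :=
    (((hasDerivAt_id' u).mul (hasDerivAt_cosh u)).sub (hasDerivAt_sinh u)).congr_deriv (by ring)
  have mono : MonotoneOn (fun s => s * cosh s - sinh s) (Set.Ici 0) := by
    refine monotoneOn_of_deriv_nonneg (convex_Ici 0)
      (fun u _ => (hasDeriv u).continuousAt.continuousWithinAt)
      (fun u _ => (hasDeriv u).differentiableAt.differentiableWithinAt) fun u hu => ?_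
    rw [interior_Ici] at hu
    rw [(hasDeriv u).deriv]
    exact mul_nonneg hu.le (sinh_nonneg_iff.mpr hu.le)
  simpa using mono Set.self_mem_Ici hx hx

theorem tanh_nonneg {x : ℝ} (hx : 0 ≤ x) : 0 ≤ tanh x := by
  rw [tanh_eq_sinh_div_cosh]
  exact div_nonneg (sinh_nonneg_iff.mpr hx) (cosh_pos x).le

theorem tanh_le_self {x : ℝ} (hx : 0 ≤ x) : tanh x ≤ x := by
  rw [tanh_eq_sinh_div_cosh, div_le_iff₀ (cosh_pos x)]
  exact sinh_le_mul_cosh hx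

theorem abs_tanh_le_abs (x : ℝ) : |tanh x| ≤ |x| := by
  rcases le_total 0 x with hx | hx
  · rw [abs_of_nonneg hx, abs_of_nonneg (tanh_nonneg hx)]
    exact tanh_le_self hx
  · have hx' : 0 ≤ -x := neg_nonneg.mpr hx
    rw [← abs_neg x, ← abs_neg (tanh x), ← tanh_neg, abs_of_nonneg hx',
      abs_of_nonneg (tanh_nonneg hx')]
    exact tanh_le_self hx'

theorem mul_tanh_nonneg (x : ℝ) : 0 ≤ x * tanh x := by
  rcases le_total 0 x with hx | hx
  · exact mul_nonneg hx (tanh_nonneg hx)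
  · simpa [tanh_neg] using mul_nonneg (neg_nonneg.mpr hx) (tanh_nonneg (neg_nonneg.mpr hx))

end Real

theorem mul_tanh_const_mul_nonneg {β : ℝ} (hβ : 0 < β) (ξ : ℝ) : 0 ≤ ξ * tanh (β * ξ) :=
  nonneg_of_mul_nonneg_right (by simpa [mul_assoc] using mul_tanh_nonneg (β * ξ)) hβ

theorem abs_tanh_const_mul_le {β : ℝ} (hβ : 0 ≤ β) (ξ : ℝ) : |tanh (β * ξ)| ≤ β * |ξ| := by
  simpa [abs_mul, abs_of_nonneg hβ] using abs_tanh_le_abs (β * ξ)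

theorem mul_le_half_mul_sq_add_sq_div {ε : ℝ} (hε : 0 < ε) (a b : ℝ) :
    a * b ≤ ε / 2 * a ^ 2 + b ^ 2 / (2 * ε) := by
  have key : ε / 2 * a ^ 2 + b ^ 2 / (2 * ε) - a * b = (ε * a - b) ^ 2 / (2 * ε) := by
    field_simp
    ring
  rw [← sub_nonneg, key]
  positivity

theorem add_mul_exp_neg_mul_le {σ₂ σ₃ β m : ℝ} (hσ₃ : 0 ≤ σ₃) (hβ : 0 ≤ β) (hm : 0 ≤ m) :
    σ₂ + σ₃ * exp (-β * m) ≤ σ₂ + σ₃ := by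
  gcongr
  exact mul_le_of_le_one_right hσ₃ (exp_le_one_iff.mpr (by nlinarith))

theorem abs_mul_add_mul_tanh_le {σ c C β : ℝ} (hσ : 0 ≤ σ) (hc : 0 ≤ c) (hcC : c ≤ C)
    (hβ : 0 ≤ β) (ξ : ℝ) : |σ * ξ + c * tanh (β * ξ)| ≤ (σ + C * β) * |ξ| :=
  calc |σ * ξ + c * tanh (β * ξ)| ≤ σ * |ξ| + c * |tanh (β * ξ)| := by
        simpa [abs_mul, abs_of_nonneg hσ, abs_of_nonneg hc] using
          abs_add_le (σ * ξ) (c * tanh (β * ξ))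
    _ ≤ σ * |ξ| + C * (β * |ξ|) := by
        gcongr
        · exact hc.trans hcC
        · exact abs_tanh_const_mul_le hβ ξ
    _ = (σ + C * β) * |ξ| := by ring

theorem half_add_sq_div_le_mul {k₀ σ₁ : ℝ} (hk₀ : 0 < k₀) (hσ₁ : 0 < σ₁) (S : ℝ) :
    1 / 2 + S ^ 2 / (2 * k₀) ≤ (1 + 1 / k₀ + (1 + S ^ 2 / k₀) / σ₁) * σ₁ := by
  have hexpand : (1 + 1 / k₀ + (1 + S ^ 2 / k₀) / σ₁) * σ₁ = σ₁ + σ₁ / k₀ + 1 + S ^ 2 / k₀ := by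
    field_simp
    ring
  have hhalf : S ^ 2 / (2 * k₀) ≤ S ^ 2 / k₀ :=
    div_le_div_of_nonneg_left (sq_nonneg S) hk₀ (by linarith)
  rw [hexpand]
  linarith [div_pos hσ₁ hk₀]

theorem friction_lyapunov_deriv_le {k₀ A σ₁ S c k k' x₁ x₂ T : ℝ} (hk₀ : 0 < k₀) (hA : 0 ≤ A)
    (hk : k₀ ≤ k) (hk' : k' ≤ 0) (hc : 0 ≤ c) (hT : 0 ≤ x₂ * T)
    (hcross : |σ₁ * x₂ + c * T| ≤ S * |x₂|) :
    A * k' * x₁ ^ 2 + (2 * A * k * x₁ + x₂) * x₂ + (2 * A * x₂ + x₁) * (-σ₁ * x₂ - c * T - k * x₁)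
      ≤ -(k₀ / 2) * x₁ ^ 2 + (1 + S ^ 2 / (2 * k₀) - 2 * A * σ₁) * x₂ ^ 2 := by
  have hcross' : -(x₁ * (σ₁ * x₂ + c * T)) ≤ k₀ / 2 * x₁ ^ 2 + S ^ 2 / (2 * k₀) * x₂ ^ 2 :=
    calc -(x₁ * (σ₁ * x₂ + c * T)) ≤ |x₁| * (S * |x₂|) :=
          (neg_le_abs _).trans (abs_mul x₁ _ ▸ mul_le_mul_of_nonneg_left hcross (abs_nonneg x₁))
      _ ≤ k₀ / 2 * |x₁| ^ 2 + (S * |x₂|) ^ 2 / (2 * k₀) := mul_le_half_mul_sq_add_sq_div hk₀ _ _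
      _ = k₀ / 2 * x₁ ^ 2 + S ^ 2 / (2 * k₀) * x₂ ^ 2 := by rw [sq_abs, mul_pow, sq_abs]; ring
  have hdamp : 0 ≤ A * c * (x₂ * T) := by positivity
  have hdrift : A * k' * x₁ ^ 2 ≤ 0 := mul_nonpos_of_nonpos_of_nonneg
    (mul_nonpos_of_nonneg_of_nonpos hA hk') (sq_nonneg x₁)
  nlinarith [mul_le_mul_of_nonneg_right hk (sq_nonneg x₁)]

theorem stmt7_general (k₀ k₁ σ₁ σ₂ σ₃ β₁ β₂ : ℝ)
    (hk₀ : 0 < k₀) (hσ₁ : 0 < σ₁) (hσ₂ : 0 ≤ σ₂) (hσ₃ : 0 ≤ σ₃)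
    (hβ₁ : 0 < β₁) (hβ₂ : 0 < β₂)
    (S A b : ℝ) (hS : S = σ₁ + (σ₂ + σ₃) * β₂)
    (hA : A = 1 + 1 / k₀ + (1 + S ^ 2 / k₀) / σ₁)
    (hb : b = min (k₀ / 2) (A * σ₁ - 1 / 2))
    (k : ℝ → ℝ)
    (hkb : ∀ t : ℝ, 0 ≤ t → k₀ ≤ k t ∧ k t ≤ k₁)
    (hk' : ∀ t : ℝ, 0 ≤ t → deriv k t ≤ 0)
    (μ : ℝ → ℝ) (hμ : ∀ ξ : ℝ, 0 ≤ μ ξ)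
    (f₂ : ℝ × ℝ → ℝ → ℝ)
    (hf₂ : ∀ (x : ℝ × ℝ) (t : ℝ),
      f₂ x t = -σ₁ * x.2 - (σ₂ + σ₃ * Real.exp (-β₁ * μ x.2)) *
        Real.tanh (β₂ * x.2) - k t * x.1)
    (x : ℝ × ℝ) (t : ℝ) (ht : 0 ≤ t) :
    A * deriv k t * x.1 ^ 2 + (2 * A * k t * x.1 + x.2) * x.2
        + (2 * A * x.2 + x.1) * f₂ x t
      ≤ -b * (x.1 ^ 2 + x.2 ^ 2) := by
  have hc : 0 ≤ σ₂ + σ₃ * exp (-β₁ * μ x.2) := by positivity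
  have hcross := abs_mul_add_mul_tanh_le hσ₁.le hc
    (add_mul_exp_neg_mul_le hσ₃ hβ₁.le (hμ x.2)) hβ₂.le x.2
  rw [← hS] at hcross
  have hAσ : 1 / 2 + S ^ 2 / (2 * k₀) ≤ A * σ₁ := hA ▸ half_add_sq_div_le_mul hk₀ hσ₁ S
  have hA₀ : 0 ≤ A := by rw [hA]; positivity
  have hdecay := friction_lyapunov_deriv_le (x₁ := x.1) hk₀ hA₀ (hkb t ht).1 (hk' t ht) hc
    (mul_tanh_const_mul_nonneg hβ₂ x.2) hcross
  have hb₁ : b ≤ k₀ / 2 := hb ▸ min_le_left _ _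
  have hb₂ : b ≤ A * σ₁ - 1 / 2 := hb ▸ min_le_right _ _
  rw [hf₂]
  nlinarith [mul_le_mul_of_nonneg_right hb₁ (sq_nonneg x.1),
    mul_le_mul_of_nonneg_right hb₂ (sq_nonneg x.2), mul_le_mul_of_nonneg_right hAσ (sq_nonneg x.2)]

/-- decay of the friction-model Lyapunov function
`V(x,t) = A(k(t)x₁² + x₂²) + x₁x₂` along
`ẋ₁ = x₂, ẋ₂ = −σ̃₁x₂ − (σ̃₂ + σ̃₃ e^{−β₁μ(x₂)}) tanh(β₂x₂) − k(t)x₁`.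
Here `V_t + V_x·f̄ = A k'(t) x₁² + (2A k(t) x₁ + x₂)·x₂ + (2A x₂ + x₁)·f̄₂`. -/
theorem stmt7 (k₀ k₁ σ₁ σ₂ σ₃ β₁ β₂ : ℝ)
    (hk₀ : 0 < k₀) (hk₁ : 0 < k₁) (hσ₁ : 0 < σ₁) (hσ₂ : 0 ≤ σ₂) (hσ₃ : 0 ≤ σ₃)
    (hβ₁ : 0 < β₁) (hβ₂ : 0 < β₂)
    (S A b : ℝ) (hS : S = σ₁ + (σ₂ + σ₃) * β₂)
    (hA : A = 1 + 1 / k₀ + (1 + S ^ 2 / k₀) / σ₁)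
    (hb : b = min (k₀ / 2) (A * σ₁ - 1 / 2))
    (k : ℝ → ℝ) (hkC1 : ContDiff ℝ 1 k)
    (hkb : ∀ t : ℝ, 0 ≤ t → k₀ ≤ k t ∧ k t ≤ k₁)
    (hk' : ∀ t : ℝ, 0 ≤ t → deriv k t ≤ 0)
    (μ : ℝ → ℝ) (hμc : Continuous μ) (hμ : ∀ ξ : ℝ, 0 ≤ μ ξ)
    (f₂ : ℝ × ℝ → ℝ → ℝ)
    (hf₂ : ∀ (x : ℝ × ℝ) (t : ℝ),
      f₂ x t = -σ₁ * x.2 - (σ₂ + σ₃ * Real.exp (-β₁ * μ x.2)) *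
        Real.tanh (β₂ * x.2) - k t * x.1)
    (x : ℝ × ℝ) (t : ℝ) (ht : 0 ≤ t) :
    A * deriv k t * x.1 ^ 2 + (2 * A * k t * x.1 + x.2) * x.2
        + (2 * A * x.2 + x.1) * f₂ x t
      ≤ -b * (x.1 ^ 2 + x.2 ^ 2) :=
  stmt7_general k₀ k₁ σ₁ σ₂ σ₃ β₁ β₂ hk₀ hσ₁ hσ₂ hσ₃ hβ₁ hβ₂ S A b hS hA hb k hkb hk' μ hμ f₂ hf₂ x
    t ht
end
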